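/- arXiv:2411.00249 — 2 statements merged into one kernel-verified Lean document; each statement's English description precedes it below -/
import Mathlib

section
/- For a balanced signed graph, the multiplicity of the eigenvalue 0 of the signed Laplacian counts the connected components of the underlying graph: if A is a balanced signed adjacency matrix on a finite vertex set V, then the dimension of the kernel of the signed Laplacian L(A) (as a linear map ℝ^V → ℝ^V) equals the number of connected components of the underlying graph of A. -/
open Matrix

/-- A signed adjacency matrix: symmetric, zero diagonal, entries in {-1, 0, 1}. -/
def IsSignedAdj {V : Type*} [Fintype V] (A : Matrix V V ℝ) : Prop :=
  A.IsSymm ∧ (∀ v, A v v = 0) ∧ ∀ u v, A u v = -1 ∨ A u v = 0 ∨ A u v = 1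

/-- The degree matrix `D(A)`, with `D(A) v v = ∑ u, |A v u|`. -/
def degMatrix {V : Type*} [Fintype V] [DecidableEq V] (A : Matrix V V ℝ) : Matrix V V ℝ :=
  Matrix.diagonal fun v => ∑ u, |A v u|

/-- The signed Laplacian `L(A) = D(A) - A`. -/
def signedLap {V : Type*} [Fintype V] [DecidableEq V] (A : Matrix V V ℝ) : Matrix V V ℝ :=
  degMatrix A - A

/-- `A` is balanced if some `σ : V → {−1, 1}` satisfies `A u v = σ u * σ v * |A u v|`. -/
def IsBalanced {V : Type*} [Fintype V] (A : Matrix V V ℝ) : Prop :=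
  ∃ σ : V → ℝ, (∀ v, σ v = 1 ∨ σ v = -1) ∧ ∀ u v, A u v = σ u * σ v * |A u v|

/-- The underlying simple graph of `A`: `u` adjacent to `v` iff `A u v ≠ 0`. -/
def underlying {V : Type*} (A : Matrix V V ℝ) : SimpleGraph V :=
  SimpleGraph.fromRel fun u v => A u v ≠ 0

/-!
Write `Σ = diagonal σ` for a balancing signature, so that `Σ * Σ = 1`. Balance says exactly
`A = Σ |A| Σ`, and the diagonal matrix `D(A)` commutes with `Σ`, hence `L(A) = Σ (D(A) - |A|) Σ`.
Since the entries of `A` lie in `{-1, 0, 1}`, `D(A) - |A|` is the ordinary Laplacian of the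
underlying graph, whose kernel dimension is the number of connected components, and conjugating
by the invertible `Σ` does not change the dimension of the kernel.
-/

section ConjugateKernel

variable {K n : Type*} [Field K] [Fintype n] [DecidableEq n]

theorem finrank_ker_toLin'_mul_mul {P Q : Matrix n n K} (M : Matrix n n K)
    (hP : IsUnit P.det) (hQ : IsUnit Q.det) :
    Module.finrank K (LinearMap.ker (toLin' (P * M * Q)))
      = Module.finrank K (LinearMap.ker (toLin' M)) := by
  have hrank : (P * M * Q).rank = M.rank := by
    rw [rank_mul_eq_left_of_isUnit_det _ _ hQ, rank_mul_eq_right_of_isUnit_det _ _ hP]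
  have h₁ := LinearMap.finrank_range_add_finrank_ker (P * M * Q).mulVecLin
  have h₂ := LinearMap.finrank_range_add_finrank_ker M.mulVecLin
  rw [Matrix.rank, Matrix.rank] at hrank
  rw [toLin'_apply', toLin'_apply']
  omega

end ConjugateKernel

section Switching

variable {V : Type*} [Fintype V] [DecidableEq V] {A : Matrix V V ℝ} {σ : V → ℝ}

theorem diagonal_mul_diagonal_eq_one (hσ : ∀ v, σ v = 1 ∨ σ v = -1) :
    diagonal σ * diagonal σ = 1 := by
  rw [diagonal_mul_diagonal, ← diagonal_one]
  congr 1
  funext v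
  rcases hσ v with h | h <;> simp [h]

theorem diagonal_mul_map_abs_mul_diagonal (hb : ∀ u v, A u v = σ u * σ v * |A u v|) :
    diagonal σ * A.map abs * diagonal σ = A := by
  ext u v
  rw [mul_diagonal, diagonal_mul, map_apply]
  conv_rhs => rw [hb u v]
  ring

theorem diagonal_mul_degMatrix_mul_diagonal (hσ : ∀ v, σ v = 1 ∨ σ v = -1) :
    diagonal σ * degMatrix A * diagonal σ = degMatrix A := by
  rw [degMatrix, diagonal_mul_diagonal, diagonal_mul_diagonal]
  congr 1
  funext v
  rcases hσ v with h | h <;> simp [h]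

theorem signedLap_eq_diagonal_mul_mul_diagonal (hσ : ∀ v, σ v = 1 ∨ σ v = -1)
    (hb : ∀ u v, A u v = σ u * σ v * |A u v|) :
    signedLap A = diagonal σ * (degMatrix A - A.map abs) * diagonal σ := by
  rw [mul_sub, sub_mul, diagonal_mul_degMatrix_mul_diagonal hσ,
    diagonal_mul_map_abs_mul_diagonal hb, signedLap]

end Switching

section Underlying

variable {V : Type*} {A : Matrix V V ℝ}

theorem underlying_adj_iff (hsymm : A.IsSymm) {u v : V} :
    (underlying A).Adj u v ↔ u ≠ v ∧ A u v ≠ 0 := by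
  simp [underlying, hsymm.apply v u]

variable [Fintype V] [DecidableRel (underlying A).Adj]

theorem adjMatrix_underlying (hA : IsSignedAdj A) :
    (underlying A).adjMatrix ℝ = A.map abs := by
  obtain ⟨hsymm, hdiag, hent⟩ := hA
  ext u v
  rw [SimpleGraph.adjMatrix_apply, map_apply]
  by_cases huv : u = v
  · simp [huv, hdiag]
  · rcases hent u v with h | h | h <;> simp [underlying_adj_iff hsymm, h, huv]

theorem lapMatrix_underlying [DecidableEq V] (hA : IsSignedAdj A) :
    (underlying A).lapMatrix ℝ = degMatrix A - A.map abs := by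
  rw [SimpleGraph.lapMatrix, adjMatrix_underlying hA, SimpleGraph.degMatrix, degMatrix]
  congr 2
  funext v
  rw [SimpleGraph.degree_eq_sum_if_adj]
  exact Finset.sum_congr rfl fun u _ => by
    rw [← SimpleGraph.adjMatrix_apply, adjMatrix_underlying hA, map_apply]

end Underlying

/-- For a balanced signed graph, the multiplicity of the eigenvalue `0` of the signed
Laplacian (the dimension of its kernel as a linear map `ℝ^V → ℝ^V`) equals the number
of connected components of the underlying graph. -/
theorem balanced_kernel_dim_eq_card_components {V : Type*} [Fintype V] [DecidableEq V]
    (A : Matrix V V ℝ) (hA : IsSignedAdj A) (hbal : IsBalanced A) :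
    Module.finrank ℝ (LinearMap.ker (Matrix.toLin' (signedLap A)))
      = Nat.card (underlying A).ConnectedComponent := by
  classical
  obtain ⟨σ, hσ, hb⟩ := hbal
  have hσ_det : IsUnit (diagonal σ).det :=
    isUnit_det_of_right_inverse (diagonal_mul_diagonal_eq_one hσ)
  rw [signedLap_eq_diagonal_mul_mul_diagonal hσ hb, finrank_ker_toLin'_mul_mul _ hσ_det hσ_det,
    ← lapMatrix_underlying hA,
    ← SimpleGraph.card_connectedComponent_eq_finrank_ker_toLin'_lapMatrix,
    Nat.card_eq_fintype_card]
end

section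
/- A connected unbalanced signed graph has no zero eigenvalue: let A be a signed adjacency matrix on a finite vertex set V whose underlying graph is connected. If there exists a nonzero vector x : V → ℝ with L(A) · x = 0, then A is balanced (and moreover all entries of x have the same nonzero absolute value, with σ v = x v / |x v| a balance witness). Equivalently, if A is connected and unbalanced, then 0 is not an eigenvalue of the signed Laplacian L(A). -/
open Matrix

/-!
Since the entries of `A` lie in `{-1, 0, 1}`, the quadratic form of the signed Laplacian is
`2 xᵀ L(A) x = ∑ v, ∑ u, |A v u| (x v - A v u x u)²`. A kernel vector therefore satisfies
`x u = A u v * x v` along every edge, so `|x|` is constant on the connected graph and hence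
nowhere zero, and the signs of `x` balance `A`.
-/

open Finset

theorem SimpleGraph.Reachable.eq_of_forall_adj {V α : Type*} {G : SimpleGraph V} {f : V → α}
    (hf : ∀ u v, G.Adj u v → f u = f v) {u v : V} (huv : G.Reachable u v) : f u = f v := by
  obtain ⟨w⟩ := huv
  induction w with
  | nil => rfl
  | cons hadj _ ih => exact (hf _ _ hadj).trans ih

theorem div_abs_eq_one_or_eq_neg_one {a : ℝ} (ha : a ≠ 0) : a / |a| = 1 ∨ a / |a| = -1 := by
  rcases ha.lt_or_gt with hneg | hpos
  · right
    rw [abs_of_neg hneg, div_neg, div_self ha]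
  · left
    rw [abs_of_pos hpos, div_self ha]

theorem eq_div_abs_mul_div_abs_mul_abs_of_abs_eq_one {a y : ℝ} (hy : y ≠ 0) (ha : |a| = 1) :
    a = a * y / |a * y| * (y / |y|) * |a| := by
  rw [abs_mul, ha]
  field_simp
  rw [sq_abs]

theorem signedLap_mulVec_apply {V : Type*} [Fintype V] [DecidableEq V] (A : Matrix V V ℝ)
    (x : V → ℝ) (v : V) :
    (signedLap A *ᵥ x) v = (∑ u, |A v u|) * x v - ∑ u, A v u * x u := by
  rw [signedLap, degMatrix, sub_mulVec, Pi.sub_apply, mulVec_diagonal]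
  rfl

namespace IsSignedAdj

variable {V : Type*} [Fintype V] {A : Matrix V V ℝ}

theorem abs_eq_one_of_ne_zero (hA : IsSignedAdj A) {u v : V} (h : A u v ≠ 0) :
    |A u v| = 1 := by
  rcases hA.2.2 u v with h' | h' | h' <;> simp_all

theorem abs_mul_sub_mul_sq (hA : IsSignedAdj A) (x : V → ℝ) (u v : V) :
    |A v u| * (x v - A v u * x u) ^ 2
      = |A v u| * x v ^ 2 + |A v u| * x u ^ 2 - 2 * (A v u * x u * x v) := by
  rcases hA.2.2 v u with h | h | h <;> rw [h] <;> norm_num <;> ring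

theorem sum_abs_mul_sub_mul_sq [DecidableEq V] (hA : IsSignedAdj A) (x : V → ℝ) :
    ∑ v, ∑ u, |A v u| * (x v - A v u * x u) ^ 2 = 2 * (x ⬝ᵥ (signedLap A *ᵥ x)) := by
  have hswap : ∑ v, ∑ u, |A v u| * x u ^ 2 = ∑ v, ∑ u, |A v u| * x v ^ 2 := by
    rw [Finset.sum_comm]
    simp_rw [hA.1.apply]
  have hquad : x ⬝ᵥ (signedLap A *ᵥ x)
      = ∑ v, ∑ u, |A v u| * x v ^ 2 - ∑ v, ∑ u, A v u * x u * x v := by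
    rw [dotProduct, ← sum_sub_distrib]
    refine sum_congr rfl fun v _ => ?_
    rw [signedLap_mulVec_apply, ← sum_mul, ← sum_mul]
    ring
  simp_rw [abs_mul_sub_mul_sq hA x, sum_sub_distrib, sum_add_distrib, hswap, hquad, ← mul_sum]
  ring

theorem eq_mul_of_signedLap_mulVec_eq_zero [DecidableEq V] (hA : IsSignedAdj A) {x : V → ℝ}
    (hker : signedLap A *ᵥ x = 0) {u v : V} (h : A u v ≠ 0) : x u = A u v * x v := by
  have hnonneg : ∀ u v, 0 ≤ |A u v| * (x u - A u v * x v) ^ 2 := fun _ _ => by positivity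
  have hsum : ∑ u, ∑ v, |A u v| * (x u - A u v * x v) ^ 2 = 0 := by
    rw [sum_abs_mul_sub_mul_sq hA, hker, dotProduct_zero, mul_zero]
  have hterm : |A u v| * (x u - A u v * x v) ^ 2 = 0 :=
    (sum_eq_zero_iff_of_nonneg fun _ _ => hnonneg u _).mp
      ((sum_eq_zero_iff_of_nonneg fun _ _ => sum_nonneg fun _ _ => hnonneg _ _).mp hsum u
        (mem_univ u)) v (mem_univ v)
  rw [hA.abs_eq_one_of_ne_zero h, one_mul, sq_eq_zero_iff, sub_eq_zero] at hterm
  exact hterm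

theorem abs_eq_abs_of_signedLap_mulVec_eq_zero [DecidableEq V] (hA : IsSignedAdj A)
    (hconn : (underlying A).Connected) {x : V → ℝ} (hker : signedLap A *ᵥ x = 0) (u v : V) :
    |x u| = |x v| := by
  refine SimpleGraph.Reachable.eq_of_forall_adj (f := fun w => |x w|)
    (fun a b hab => ?_) (hconn u v)
  have hab : A a b ≠ 0 := by
    obtain ⟨-, h | h⟩ := hab
    · exact h
    · rwa [hA.1.apply a b] at h
  rw [hA.eq_mul_of_signedLap_mulVec_eq_zero hker hab, abs_mul, hA.abs_eq_one_of_ne_zero hab,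
    one_mul]

theorem eq_div_abs_mul_div_abs_mul_abs [DecidableEq V] (hA : IsSignedAdj A) {x : V → ℝ}
    (hker : signedLap A *ᵥ x = 0) (hx : ∀ v, x v ≠ 0) (u v : V) :
    A u v = x u / |x u| * (x v / |x v|) * |A u v| := by
  by_cases h : A u v = 0
  · simp [h]
  · rw [hA.eq_mul_of_signedLap_mulVec_eq_zero hker h]
    exact eq_div_abs_mul_div_abs_mul_abs_of_abs_eq_one (hx v) (hA.abs_eq_one_of_ne_zero h)

end IsSignedAdj

/-- A connected unbalanced signed graph has no zero eigenvalue: if the underlying graph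
of `A` is connected and the signed Laplacian has a nonzero kernel vector `x`, then `A`
is balanced; moreover all entries of `x` have the same nonzero absolute value and
`σ v = x v / |x v|` is a balance witness. -/
theorem connected_kernel_imp_balanced {V : Type*} [Fintype V] [DecidableEq V]
    (A : Matrix V V ℝ) (hA : IsSignedAdj A)
    (hconn : (underlying A).Connected)
    (x : V → ℝ) (hx : x ≠ 0) (hker : signedLap A *ᵥ x = 0) :
    IsBalanced A ∧
    (∀ v, x v ≠ 0) ∧
    (∀ u v, |x u| = |x v|) ∧
    (∀ v, x v / |x v| = 1 ∨ x v / |x v| = -1) ∧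
    (∀ u v, A u v = (x u / |x u|) * (x v / |x v|) * |A u v|) := by
  have habs := hA.abs_eq_abs_of_signedLap_mulVec_eq_zero hconn hker
  obtain ⟨v₀, hv₀⟩ := Function.ne_iff.mp hx
  have hne : ∀ v, x v ≠ 0 := fun v =>
    abs_ne_zero.mp ((habs v v₀).trans_ne (abs_ne_zero.mpr hv₀))
  have hsign : ∀ v, x v / |x v| = 1 ∨ x v / |x v| = -1 := fun v =>
    div_abs_eq_one_or_eq_neg_one (hne v)
  have hbal := hA.eq_div_abs_mul_div_abs_mul_abs hker hne
  exact ⟨⟨fun v => x v / |x v|, hsign, hbal⟩, hne, habs, hsign, hbal⟩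
end
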